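/- arXiv:1608.03032 — 3 statements merged into one kernel-verified Lean document; each statement's English description precedes it below -/
import Mathlib

section
/- Fix M ≥ 1 and nonzero reals δ₁,…,δ_M, and let p(b) = P( Σ_{k=1}^M W_k + (1/2) χ²_{M+1} > b ), where W₁,…,W_M, χ²_{M+1} are independent, χ²_{M+1} is chi-squared with M+1 degrees of freedom, and W_k is distributed as W(δ_k). Let b_ℓ → ∞ and y_ℓ → ∞ be sequences with log y_ℓ / log log b_ℓ → 0. Then P( χ²_{M+1} ≥ 2b_ℓ − y_ℓ ) / p(b_ℓ) → 0 as ℓ → ∞. -/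
open MeasureTheory ProbabilityTheory Filter Finset

noncomputable section

/-- Partial sum `S_j = X₁ + ⋯ + X_j` (so `S_0 = 0`). -/
def partialSum (x : ℕ → ℝ) (j : ℕ) : ℝ := ∑ l ∈ Finset.range j, x (l + 1)

/-- The statistic `Z_{i,j,k}`. -/
def Zstat (x : ℕ → ℝ) (i j k : ℕ) : ℝ :=
  (partialSum x j - partialSum x i
      - ((j : ℝ) - (i : ℝ)) * (partialSum x k - partialSum x i) / ((k : ℝ) - (i : ℝ))) /
    Real.sqrt (((j : ℝ) - (i : ℝ)) * (1 - ((j : ℝ) - (i : ℝ)) / ((k : ℝ) - (i : ℝ))))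

/-- Standard normal distribution function `Φ`. -/
def stdNormalCDF (x : ℝ) : ℝ := (ProbabilityTheory.gaussianReal 0 1 (Set.Iic x)).toReal

/-- The function `ν(x) = 2 x⁻² exp(−2 Σ_{n≥1} n⁻¹ Φ(−x√n/2))`. -/
def nuFn (x : ℝ) : ℝ :=
  2 * (x ^ 2)⁻¹ *
    Real.exp (-2 * ∑' n : ℕ, ((n : ℝ) + 1)⁻¹ *
      stdNormalCDF (-(x * Real.sqrt ((n : ℝ) + 1) / 2)))

/-- Chi-squared probability density with `d` degrees of freedom. -/
def chiSqPDF (d : ℕ) (y : ℝ) : ℝ :=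
  y ^ ((d : ℝ) / 2 - 1) * Real.exp (-y / 2) / (2 ^ ((d : ℝ) / 2) * Real.Gamma ((d : ℝ) / 2))

/-- Standard normal density `φ`. -/
def stdNormalPDF (x : ℝ) : ℝ := Real.exp (-x ^ 2 / 2) / Real.sqrt (2 * Real.pi)

/-!
The numerator is a chi-squared tail: since `χ²_{M+1}/2` is Gamma with shape `a = (M+1)/2`,
`P(χ ≥ 2b - y) = O(b^{a-1} e^{-b + y/2})`. For the denominator a single `W_k` suffices:
on `{χ = x}` with `x ∈ (b/2, b]` we have `P(W_k > b - x/2) ≥ ν e^{-(b - x/2)}`, and the factor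
`e^{x/2}` cancels the exponential of the chi-squared density, so integrating over this window of
length `b/2` gives `p(b) ≳ b · b^{a-1} e^{-b}`. Hence the ratio is `O(e^{y/2}/b)`, and the growth
condition on `y` forces `y ≤ log b` eventually, so the ratio is `O(b^{-1/2})`.
-/

open Real Topology

lemma rpow_mul_exp_neg_le_of_le {p c t x : ℝ} (hc : 0 ≤ c) (ht : 0 < t) (htx : t ≤ x)
    (hp : p ≤ c * t) : x ^ p * exp (-(c * x)) ≤ t ^ p * exp (-(c * t)) := by
  have hx : 0 < x := ht.trans_le htx
  rw [rpow_def_of_pos hx, rpow_def_of_pos ht, ← exp_add, ← exp_add, exp_le_exp]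
  have hlog : log x - log t ≤ (x - t) / t := by
    rw [← log_div hx.ne' ht.ne', sub_div, div_self ht.ne']
    exact log_le_sub_one_of_pos (div_pos hx ht)
  have hlog0 : 0 ≤ log x - log t := sub_nonneg.mpr (log_le_log ht htx)
  rcases le_total p 0 with hp0 | hp0
  · nlinarith
  · have : p * ((x - t) / t) ≤ c * (x - t) := by
      rw [mul_div_assoc', div_le_iff₀ ht]
      nlinarith
    nlinarith

lemma gammaMeasure_Ici_le {a r t : ℝ} (ha : 0 < a) (hr : 0 < r) (ht : 0 < t)
    (hat : a - 1 ≤ r / 2 * t) :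
    gammaMeasure a r (Set.Ici t) ≤ ENNReal.ofReal (2 / r * gammaPDFReal a r t) := by
  have hΓ := Gamma_pos_of_pos ha
  set K := r ^ a / Gamma a * (t ^ (a - 1) * exp (-(r / 2 * t)))
  have hsplit : ∀ x, exp (-(r * x)) = exp (-(r / 2 * x)) * exp (-(r / 2) * x) := fun x => by
    rw [← exp_add]; ring_nf
  have hpdf : ∀ x ∈ Set.Ici t, gammaPDF a r x ≤ ENNReal.ofReal (K * exp (-(r / 2) * x)) := by
    intro x (hx : t ≤ x)
    rw [gammaPDF_of_nonneg (ht.le.trans hx), hsplit, ← mul_assoc, mul_assoc _ (x ^ _)]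
    gcongr
    exact mul_le_mul_of_nonneg_left (rpow_mul_exp_neg_le_of_le (by positivity) ht hx hat)
      (by positivity)
  have hint : IntegrableOn (fun x => K * exp (-(r / 2) * x)) (Set.Ici t) :=
    (Iff.mpr integrableOn_Ici_iff_integrableOn_Ioi
      (exp_neg_integrableOn_Ioi t (by positivity))).const_mul K
  calc gammaMeasure a r (Set.Ici t) = ∫⁻ x in Set.Ici t, gammaPDF a r x :=
        withDensity_apply _ measurableSet_Ici
    _ ≤ ∫⁻ x in Set.Ici t, ENNReal.ofReal (K * exp (-(r / 2) * x)) :=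
        setLIntegral_mono (by fun_prop) hpdf
    _ = ENNReal.ofReal (∫ x in Set.Ici t, K * exp (-(r / 2) * x)) :=
        (ofReal_integral_eq_lintegral_ofReal hint (ae_of_all _ fun x => by positivity)).symm
    _ = ENNReal.ofReal (2 / r * gammaPDFReal a r t) := by
        rw [integral_Ici_eq_integral_Ioi, integral_const_mul, integral_exp_mul_Ioi (by linarith),
          gammaPDFReal, if_pos ht.le, hsplit]
        congr 1
        simp only [K]
        field_simp

lemma ofReal_le_setLIntegral_exp_gammaMeasure {a r u v : ℝ} (ha : 1 ≤ a) (hr : 0 < r)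
    (hu : 0 ≤ u) :
    ENNReal.ofReal ((v - u) * (r ^ a / Gamma a * u ^ (a - 1))) ≤
      ∫⁻ x in Set.Ioc u v, ENNReal.ofReal (exp (r * x)) ∂gammaMeasure a r := by
  have ha0 : 0 < a := zero_lt_one.trans_le ha
  have hΓ := Gamma_pos_of_pos ha0
  rw [gammaMeasure, setLIntegral_withDensity_eq_setLIntegral_mul _
    (f := gammaPDF a r) (measurable_gammaPDFReal a r).ennreal_ofReal (by fun_prop)
    measurableSet_Ioc]
  calc ENNReal.ofReal ((v - u) * (r ^ a / Gamma a * u ^ (a - 1)))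
      = ∫⁻ _ in Set.Ioc u v, ENNReal.ofReal (r ^ a / Gamma a * u ^ (a - 1)) := by
        rw [setLIntegral_const, volume_Ioc, ← ENNReal.ofReal_mul (by positivity), mul_comm]
    _ ≤ _ := by
        refine setLIntegral_mono' measurableSet_Ioc fun x hx => ?_
        have hx0 : 0 ≤ x := hu.trans hx.1.le
        rw [Pi.mul_apply, gammaPDF_of_nonneg hx0, ← ENNReal.ofReal_mul (by positivity),
          mul_assoc, ← exp_add, neg_add_cancel, exp_zero, mul_one]
        gcongr
        exact hx.1.le

lemma gammaMeasure_Ici_two_mul_sub_le {a b y : ℝ} (ha : 1 ≤ a) (hb : 0 < b) (hy : 0 ≤ y)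
    (hyb : y ≤ b) (hab : 4 * (a - 1) ≤ b) :
    (gammaMeasure a (1 / 2) (Set.Ici (2 * b - y))).toReal ≤
      4 * ((1 / 2) ^ a / Gamma a * (2 * b) ^ (a - 1)) * exp (-b) * exp (y / 2) := by
  have ha0 : 0 < a := zero_lt_one.trans_le ha
  have ht : 0 < 2 * b - y := by linarith
  refine ENNReal.toReal_le_of_le_ofReal (by positivity)
    ((gammaMeasure_Ici_le ha0 (by norm_num) ht (by linarith)).trans
      (ENNReal.ofReal_le_ofReal ?_))
  have hexp : exp (-(1 / 2 * (2 * b - y))) = exp (-b) * exp (y / 2) := by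
    rw [← exp_add]; ring_nf
  rw [gammaPDFReal, if_pos ht.le, hexp]
  calc _ = 4 * ((1 / 2) ^ a / Gamma a * (2 * b - y) ^ (a - 1)) * exp (-b) * exp (y / 2) := by
        ring
    _ ≤ 4 * ((1 / 2) ^ a / Gamma a * (2 * b) ^ (a - 1)) * exp (-b) * exp (y / 2) := by
        gcongr; linarith
    _ = _ := by ring

theorem ProbabilityTheory.IndepFun.measure_prodMk_mem_eq_lintegral {Ω α β : Type*}
    [MeasurableSpace Ω] [MeasurableSpace α] [MeasurableSpace β] {μ : Measure Ω}
    [IsFiniteMeasure μ] {X : Ω → α} {Y : Ω → β} (hXY : IndepFun X Y μ) (hX : Measurable X)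
    (hY : Measurable Y) {s : Set (α × β)} (hs : MeasurableSet s) :
    μ {ω | (X ω, Y ω) ∈ s} = ∫⁻ y, μ {ω | (X ω, y) ∈ s} ∂μ.map Y := by
  change μ ((fun ω => (X ω, Y ω)) ⁻¹' s) = _
  rw [← Measure.map_apply (hX.prodMk hY) hs,
    (indepFun_iff_map_prod_eq_prod_map_map hX.aemeasurable hY.aemeasurable).mp hXY,
    Measure.prod_apply_symm hs]
  refine lintegral_congr fun y => ?_
  rw [Measure.map_apply hX (measurable_prodMk_right hs)]
  rfl

lemma nuFn_pos {x : ℝ} (hx : x ≠ 0) : 0 < nuFn x := by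
  unfold nuFn
  positivity

section TailBounds

variable {Ω : Type*} [MeasurableSpace Ω] {P : Measure Ω} [IsFiniteMeasure P]

lemma ofReal_mul_exp_neg_le_measure_lt {Z : Ω → ℝ} {ν x : ℝ}
    (hZ : (P {ω | x < Z ω}).toReal = 2 * ν * exp (-x) - ν ^ 2 * exp (-2 * x))
    (hν : 0 ≤ ν) (hνx : ν * exp (-x) ≤ 1) :
    ENNReal.ofReal (ν * exp (-x)) ≤ P {ω | x < Z ω} := by
  rw [← ENNReal.ofReal_toReal (measure_ne_top P _), hZ]
  refine ENNReal.ofReal_le_ofReal ?_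
  have hexp : exp (-2 * x) = exp (-x) ^ 2 := by rw [← exp_nat_mul]; ring_nf
  rw [hexp]
  nlinarith [mul_nonneg hν (exp_pos (-x)).le]

lemma ofReal_le_measure_lt_add_half {Z χ : Ω → ℝ} (hZ : Measurable Z) (hχ : Measurable χ)
    (hZχ : IndepFun Z χ P) {a ν b : ℝ} (ha : 1 ≤ a)
    (hχlaw : P.map χ = gammaMeasure a (1 / 2))
    (hZlaw : ∀ x, 0 ≤ x →
      (P {ω | x < Z ω}).toReal = 2 * ν * exp (-x) - ν ^ 2 * exp (-2 * x))
    (hν : 0 ≤ ν) (hb : 0 ≤ b) (hνb : ν ≤ exp (b / 2)) :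
    ENNReal.ofReal (ν * exp (-b) * (b / 2 * ((1 / 2) ^ a / Gamma a * (b / 2) ^ (a - 1)))) ≤
      P {ω | b < Z ω + χ ω / 2} := by
  have ha0 : 0 < a := zero_lt_one.trans_le ha
  have hslice : ∀ x ∈ Set.Ioc (b / 2) b, ENNReal.ofReal (ν * exp (-b)) *
      ENNReal.ofReal (exp (1 / 2 * x)) ≤ P {ω | b < Z ω + x / 2} := by
    intro x hx
    have hνx : ν * exp (-(b - x / 2)) ≤ 1 := by
      calc ν * exp (-(b - x / 2)) ≤ exp (b / 2) * exp (-(b - x / 2)) := by gcongr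
        _ = exp ((x - b) / 2) := by rw [← exp_add]; ring_nf
        _ ≤ 1 := exp_le_one_iff.mpr (by linarith [hx.2])
    calc ENNReal.ofReal (ν * exp (-b)) * ENNReal.ofReal (exp (1 / 2 * x))
        = ENNReal.ofReal (ν * exp (-(b - x / 2))) := by
          rw [← ENNReal.ofReal_mul (by positivity), mul_assoc, ← exp_add]
          ring_nf
      _ ≤ P {ω | b - x / 2 < Z ω} :=
          ofReal_mul_exp_neg_le_measure_lt (hZlaw _ (by linarith [hx.2])) hν hνx
      _ ≤ P {ω | b < Z ω + x / 2} :=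
          measure_mono (Set.ofPred_subset_ofPred.mpr fun ω h => by linarith)
  calc ENNReal.ofReal (ν * exp (-b) * (b / 2 * ((1 / 2) ^ a / Gamma a * (b / 2) ^ (a - 1))))
      = ENNReal.ofReal (ν * exp (-b)) *
          ENNReal.ofReal ((b - b / 2) * ((1 / 2) ^ a / Gamma a * (b / 2) ^ (a - 1))) := by
        rw [← ENNReal.ofReal_mul (by positivity)]
        ring_nf
    _ ≤ ENNReal.ofReal (ν * exp (-b)) * ∫⁻ x in Set.Ioc (b / 2) b,
          ENNReal.ofReal (exp (1 / 2 * x)) ∂gammaMeasure a (1 / 2) := by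
        gcongr
        exact ofReal_le_setLIntegral_exp_gammaMeasure ha (by norm_num) (by positivity)
    _ = ∫⁻ x in Set.Ioc (b / 2) b, ENNReal.ofReal (ν * exp (-b)) *
          ENNReal.ofReal (exp (1 / 2 * x)) ∂gammaMeasure a (1 / 2) :=
        (lintegral_const_mul _ (by fun_prop)).symm
    _ ≤ ∫⁻ x in Set.Ioc (b / 2) b, P {ω | b < Z ω + x / 2} ∂gammaMeasure a (1 / 2) :=
        setLIntegral_mono' measurableSet_Ioc hslice
    _ ≤ ∫⁻ x, P {ω | b < Z ω + x / 2} ∂gammaMeasure a (1 / 2) :=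
        setLIntegral_le_lintegral _ _
    _ = P {ω | b < Z ω + χ ω / 2} := by
        rw [← hχlaw]
        exact (hZχ.measure_prodMk_mem_eq_lintegral hZ hχ (s := {p | b < p.1 + p.2 / 2})
          (measurableSet_lt measurable_const (by fun_prop))).symm

lemma measure_ge_div_measure_lt_add_half_le {Z S χ : Ω → ℝ} (hZ : Measurable Z)
    (hχ : Measurable χ) (hZχ : IndepFun Z χ P) (hZS : ∀ ω, Z ω ≤ S ω) {a ν b y : ℝ}
    (ha : 1 ≤ a) (hχlaw : P.map χ = gammaMeasure a (1 / 2))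
    (hZlaw : ∀ x, 0 ≤ x →
      (P {ω | x < Z ω}).toReal = 2 * ν * exp (-x) - ν ^ 2 * exp (-2 * x))
    (hν : 0 < ν) (hb : 0 < b) (hy : 0 ≤ y) (hyb : y ≤ b) (hab : 4 * (a - 1) ≤ b)
    (hνb : ν ≤ exp (b / 2)) :
    (P {ω | 2 * b - y ≤ χ ω}).toReal / (P {ω | b < S ω + χ ω / 2}).toReal ≤
      8 * 4 ^ (a - 1) / ν * (exp (y / 2) / b) := by
  have ha0 : 0 < a := zero_lt_one.trans_le ha
  have hN : (P {ω | 2 * b - y ≤ χ ω}).toReal ≤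
      4 * ((1 / 2) ^ a / Gamma a * (2 * b) ^ (a - 1)) * exp (-b) * exp (y / 2) := by
    change (P (χ ⁻¹' Set.Ici (2 * b - y))).toReal ≤ _
    rw [← Measure.map_apply hχ measurableSet_Ici, hχlaw]
    exact gammaMeasure_Ici_two_mul_sub_le ha hb hy hyb hab
  have hD : ν * exp (-b) * (b / 2 * ((1 / 2) ^ a / Gamma a * (b / 2) ^ (a - 1))) ≤
      (P {ω | b < S ω + χ ω / 2}).toReal := by
    refine (ENNReal.ofReal_le_iff_le_toReal (measure_ne_top _ _)).mp ?_
    exact (ofReal_le_measure_lt_add_half hZ hχ hZχ ha hχlaw hZlaw hν.le hb.le hνb).trans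
      (measure_mono (Set.ofPred_subset_ofPred.mpr fun ω h => by linarith [hZS ω]))
  have hscale : (2 * b) ^ (a - 1) = 4 ^ (a - 1) * (b / 2) ^ (a - 1) := by
    rw [← mul_rpow (by norm_num) (by positivity)]
    ring_nf
  rw [div_le_iff₀ ((by positivity : (0 : ℝ) < _).trans_le hD)]
  refine hN.trans (le_of_eq_of_le ?_ (mul_le_mul_of_nonneg_left hD (by positivity)))
  rw [hscale]
  field_simp
  ring

end TailBounds

lemma eventually_le_of_tendsto_log_div_log {ι : Type*} {l : Filter ι} {y L : ι → ℝ}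
    (hL : Tendsto L l atTop) (h : Tendsto (fun i => log (y i) / log (L i)) l (𝓝 0)) :
    ∀ᶠ i in l, y i ≤ L i := by
  filter_upwards [(tendsto_log_atTop.comp hL).eventually_gt_atTop 0,
    h.eventually_lt_const one_pos, hL.eventually_gt_atTop 0] with i hlog hlt hL0
  rcases le_or_gt (y i) 0 with hy | hy
  · linarith
  · rw [Function.comp_apply] at hlog
    rw [div_lt_one hlog, log_lt_log_iff hy hL0] at hlt
    exact hlt.le

lemma tendsto_exp_half_div_of_le_log {ι : Type*} {l : Filter ι} {y b : ι → ℝ}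
    (hb : Tendsto b l atTop) (hyb : ∀ᶠ i in l, y i ≤ log (b i)) :
    Tendsto (fun i => exp (y i / 2) / b i) l (𝓝 0) := by
  have hlim : Tendsto (fun i => exp (-(log (b i) / 2))) l (𝓝 0) :=
    tendsto_exp_atBot.comp (tendsto_neg_atTop_atBot.comp
      ((tendsto_log_atTop.comp hb).atTop_div_const two_pos))
  refine squeeze_zero' ?_ ?_ hlim
  · filter_upwards [hb.eventually_gt_atTop 0] with i hb0
    positivity
  · filter_upwards [hyb, hb.eventually_gt_atTop 0] with i hy hb0
    rw [div_le_iff₀ hb0]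
    calc exp (y i / 2) ≤ exp (-(log (b i) / 2) + log (b i)) := exp_le_exp.mpr (by linarith)
      _ = exp (-(log (b i) / 2)) * b i := by rw [exp_add, exp_log hb0]

/-- Claim B.3: for `p(b) = P(Σ W_k + χ²_{M+1}/2 > b)` with independent
`W_k ∼ W(δ_k)` and `χ²_{M+1}` chi-squared with `M+1` degrees of freedom, if `b_ℓ → ∞`,
`y_ℓ → ∞` and `log y_ℓ / log log b_ℓ → 0`, then `P(χ²_{M+1} ≥ 2b_ℓ − y_ℓ)/p(b_ℓ) → 0`. -/
theorem statement7
    (M : ℕ) (hM : 1 ≤ M) (δ : Fin M → ℝ) (hδ : ∀ k, δ k ≠ 0)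
    (Ω : Type*) [MeasurableSpace Ω] (P : Measure Ω) [IsProbabilityMeasure P]
    (W : Fin M → Ω → ℝ) (χ : Ω → ℝ)
    (hWmeas : ∀ k, Measurable (W k)) (hχmeas : Measurable χ)
    (hindep : iIndepFun
      (fun o => Option.elim o χ W) P)
    (hWnn : ∀ k ω, 0 ≤ W k ω)
    (hWlaw : ∀ k, ∀ x : ℝ, 0 ≤ x →
      (P {ω | x < W k ω}).toReal =
        2 * nuFn |δ k| * Real.exp (-x) - (nuFn |δ k|) ^ 2 * Real.exp (-2 * x))
    (hχlaw : P.map χ = gammaMeasure (((M : ℝ) + 1) / 2) (1 / 2))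
    (b y : ℕ → ℝ) (hb : Tendsto b atTop atTop) (hy : Tendsto y atTop atTop)
    (hyb : Tendsto (fun ℓ => Real.log (y ℓ) / Real.log (Real.log (b ℓ))) atTop (nhds 0)) :
    Tendsto (fun ℓ =>
      (P {ω | 2 * b ℓ - y ℓ ≤ χ ω}).toReal /
        (P {ω | b ℓ < (∑ k, W k ω) + χ ω / 2}).toReal)
      atTop (nhds 0) := by
  have ha : 1 ≤ ((M : ℝ) + 1) / 2 := by
    have : (1 : ℝ) ≤ M := by exact_mod_cast hM
    linarith
  set a : ℝ := ((M : ℝ) + 1) / 2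
  let k₀ : Fin M := ⟨0, hM⟩
  set ν := nuFn |δ k₀|
  have hν : 0 < ν := nuFn_pos (abs_ne_zero.mpr (hδ k₀))
  have hWχ : IndepFun (W k₀) χ P := by
    simpa using hindep.indepFun (show some k₀ ≠ none from Option.some_ne_none k₀)
  have hylog := eventually_le_of_tendsto_log_div_log (tendsto_log_atTop.comp hb) hyb
  have hbound : ∀ᶠ ℓ in atTop,
      (P {ω | 2 * b ℓ - y ℓ ≤ χ ω}).toReal / (P {ω | b ℓ < (∑ k, W k ω) + χ ω / 2}).toReal ≤
        8 * 4 ^ (a - 1) / ν * (exp (y ℓ / 2) / b ℓ) := by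
    filter_upwards [hylog, hb.eventually_gt_atTop 0, hy.eventually_ge_atTop 0,
      hb.eventually_ge_atTop (4 * (a - 1)),
      (tendsto_exp_atTop.comp (hb.atTop_div_const two_pos)).eventually_ge_atTop ν]
      with ℓ hyℓ hbℓ hy0 habℓ hνℓ
    have hyℓb : y ℓ ≤ b ℓ := hyℓ.trans ((log_le_sub_one_of_pos hbℓ).trans (by linarith))
    exact measure_ge_div_measure_lt_add_half_le (hWmeas k₀) hχmeas hWχ
      (fun ω => single_le_sum (fun k _ => hWnn k ω) (mem_univ k₀)) ha hχlaw (hWlaw k₀) hν hbℓ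
      hy0 hyℓb habℓ hνℓ
  refine squeeze_zero' (Eventually.of_forall fun ℓ => by positivity) hbound ?_
  simpa using (tendsto_exp_half_div_of_le_log hb hylog).const_mul (8 * 4 ^ (a - 1) / ν)
end
end

section
/- Let 0 < c₁ ≤ c₂ be constants and define, for b > 0 and m ∈ ℕ, p(b,m) = (1/4) b⁶ f₁(b²) · Σ_{u,v ∈ {1,…,m}, u+v ≤ m} [(m − u − v)/(u v (u+v))] · ν(b √(u/(v(u+v)))) · ν(b √(v/(u(u+v)))) · ν(b √((u+v)/(u v))). Then there exist constants 0 < C₁ ≤ C₂ and b₀ such that for all b ≥ b₀ and all m with c₁ b² ≤ m ≤ c₂ b²: C₁ b⁵ φ(b) ≤ p(b,m) ≤ C₂ b⁵ φ(b); in particular p(b,m) → 0 as b → ∞ in this regime. -/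
open MeasureTheory ProbabilityTheory Filter Finset

noncomputable section

/-- The right-hand side of the approximation (2.1). -/
def rhs21 (b : ℝ) (m : ℕ) : ℝ :=
  (1 / 4) * b ^ 6 * chiSqPDF 1 (b ^ 2) *
    ∑ u ∈ Finset.Icc 1 m, ∑ v ∈ Finset.Icc 1 m,
      (if u + v ≤ m then
        ((m : ℝ) - (u : ℝ) - (v : ℝ)) / ((u : ℝ) * v * (u + v)) *
          nuFn (b * Real.sqrt ((u : ℝ) / ((v : ℝ) * ((u : ℝ) + v)))) *
          nuFn (b * Real.sqrt ((v : ℝ) / ((u : ℝ) * ((u : ℝ) + v)))) *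
          nuFn (b * Real.sqrt (((u : ℝ) + v) / ((u : ℝ) * v)))
      else 0)

/-!
Since `f₁(b²) = φ(b) / b`, we have `p(b, m) = b⁵ φ(b) / 4 · S(b, m)` with `S` the double sum, and
it suffices to bound `S` above and below by positive constants when `m ≍ b²`.
Upper bound: `ν(x) ≤ 2 / x²`, and the squares of the three arguments of `ν` multiply to
`b⁶ / (u v (u + v))`, so each summand is at most `8 m / b⁶` and `S ≤ 8 m³ / b⁶ ≤ 8 c₂³`.
Lower bound: by the Gaussian Chernoff bound `Φ(-y) ≤ exp (-y² / 2)` the series in `ν` converges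
geometrically, so `ν` is bounded below by some `δ > 0` on compact subsets of `(0, ∞)`. For
`u, v ∈ [k, 2k]`, `k = ⌊m / 8⌋`, all arguments of `ν` lie in such a compact set and the
coefficient is at least `1 / (4 k²)`; these `(k + 1)²` terms give `S ≥ δ³ / 4`.
-/

lemma stdNormalCDF_nonneg (x : ℝ) : 0 ≤ stdNormalCDF x := ENNReal.toReal_nonneg

lemma stdNormalCDF_mono {x y : ℝ} (h : x ≤ y) : stdNormalCDF x ≤ stdNormalCDF y :=
  ENNReal.toReal_mono (measure_ne_top _ _) (measure_mono (Set.Iic_subset_Iic.mpr h))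

lemma stdNormalPDF_nonneg (x : ℝ) : 0 ≤ stdNormalPDF x := by
  unfold stdNormalPDF; positivity

/-- Chernoff bound with the Gaussian moment generating function `exp (t² / 2)`. -/
lemma stdNormalCDF_neg_le_exp {y : ℝ} (hy : 0 ≤ y) :
    stdNormalCDF (-y) ≤ Real.exp (-y ^ 2 / 2) := by
  have h := measure_le_le_exp_mul_mgf (X := id) (μ := gaussianReal 0 1) (-y) (neg_nonpos.mpr hy)
    (integrable_exp_mul_gaussianReal _)
  rw [mgf_id_gaussianReal, ← Real.exp_add] at h
  convert h using 2
  · simp [stdNormalCDF, measureReal_def, Set.Iic]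
  · push_cast; ring

/-- `nuTerm x n` is the term of index `n + 1` of the series in the exponent of `ν`. -/
def nuTerm (x : ℝ) (n : ℕ) : ℝ :=
  ((n : ℝ) + 1)⁻¹ * stdNormalCDF (-(x * Real.sqrt ((n : ℝ) + 1) / 2))

lemma nuFn_eq_exp_tsum (x : ℝ) :
    nuFn x = 2 * (x ^ 2)⁻¹ * Real.exp (-2 * ∑' n, nuTerm x n) := rfl

lemma nuTerm_nonneg (x : ℝ) (n : ℕ) : 0 ≤ nuTerm x n :=
  mul_nonneg (by positivity) (stdNormalCDF_nonneg _)

lemma antitone_nuTerm (n : ℕ) : Antitone fun x => nuTerm x n := by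
  intro x y hxy
  dsimp only [nuTerm]
  gcongr
  exact stdNormalCDF_mono (by gcongr)

lemma nuTerm_le_geometric {x : ℝ} (hx : 0 ≤ x) (n : ℕ) :
    nuTerm x n ≤ Real.exp (-x ^ 2 / 8) ^ (n + 1) := by
  have hn : (1 : ℝ) ≤ (n : ℝ) + 1 := by linarith [n.cast_nonneg (α := ℝ)]
  calc nuTerm x n ≤ 1 * stdNormalCDF (-(x * Real.sqrt ((n : ℝ) + 1) / 2)) :=
        mul_le_mul_of_nonneg_right (inv_le_one_of_one_le₀ hn) (stdNormalCDF_nonneg _)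
    _ ≤ Real.exp (-(x * Real.sqrt ((n : ℝ) + 1) / 2) ^ 2 / 2) := by
        rw [one_mul]; exact stdNormalCDF_neg_le_exp (by positivity)
    _ = Real.exp (-x ^ 2 / 8) ^ (n + 1) := by
        rw [← Real.exp_nat_mul, div_pow, mul_pow, Real.sq_sqrt (by positivity)]
        push_cast; ring_nf

lemma summable_nuTerm {x : ℝ} (hx : 0 < x) : Summable (nuTerm x) := by
  have hr : Real.exp (-x ^ 2 / 8) < 1 :=
    Real.exp_lt_one_iff.mpr (by have := pow_pos hx 2; linarith)
  refine Summable.of_nonneg_of_le (nuTerm_nonneg x) (nuTerm_le_geometric hx.le) ?_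
  exact (summable_nat_add_iff 1).mpr (summable_geometric_of_lt_one (Real.exp_nonneg _) hr)

lemma nuFn_le (x : ℝ) : nuFn x ≤ 2 / x ^ 2 := by
  have hseries : 0 ≤ ∑' n, nuTerm x n := tsum_nonneg (nuTerm_nonneg x)
  have h : Real.exp (-2 * ∑' n, nuTerm x n) ≤ 1 := Real.exp_le_one_iff.mpr (by linarith)
  rw [nuFn_eq_exp_tsum, div_eq_mul_inv]
  exact mul_le_of_le_one_right (by positivity) h

lemma nuFn_nonneg (x : ℝ) : 0 ≤ nuFn x := by
  rw [nuFn_eq_exp_tsum]; positivity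

/-- The series in the exponent of `ν` is antitone in `x`, hence bounded by its value at `√a`. -/
lemma le_nuFn {a A x : ℝ} (ha : 0 < a) (hx : 0 ≤ x) (hax : a ≤ x ^ 2) (hxA : x ^ 2 ≤ A) :
    2 / A * Real.exp (-2 * ∑' n, nuTerm (Real.sqrt a) n) ≤ nuFn x := by
  have hxpos : 0 < x := by nlinarith
  have hsx : Real.sqrt a ≤ x := (Real.sqrt_le_left hx).mpr hax
  have hseries : ∑' n, nuTerm x n ≤ ∑' n, nuTerm (Real.sqrt a) n :=
    Summable.tsum_le_tsum (fun n => antitone_nuTerm n hsx) (summable_nuTerm hxpos)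
      (summable_nuTerm (Real.sqrt_pos.mpr ha))
  rw [nuFn_eq_exp_tsum, div_eq_mul_inv]
  exact mul_le_mul (mul_le_mul_of_nonneg_left (inv_anti₀ (by positivity) hxA) zero_le_two)
    (Real.exp_le_exp.mpr (by linarith)) (by positivity) (by positivity)

lemma chiSqPDF_one_sq {b : ℝ} (hb : 0 < b) : chiSqPDF 1 (b ^ 2) = stdNormalPDF b / b := by
  have hpow : (b ^ 2) ^ ((1 : ℝ) / 2 - 1) = b⁻¹ := by
    rw [← Real.rpow_natCast, ← Real.rpow_mul hb.le]
    norm_num [Real.rpow_neg_one]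
  have htwo : (2 : ℝ) ^ ((1 : ℝ) / 2) = Real.sqrt 2 := by
    rw [Real.sqrt_eq_rpow]
  rw [chiSqPDF, stdNormalPDF, Nat.cast_one, hpow, htwo, Real.Gamma_one_half_eq,
    ← Real.sqrt_mul zero_le_two]
  field_simp

def nuTriple (b U V : ℝ) : ℝ :=
  nuFn (b * Real.sqrt (U / (V * (U + V)))) * nuFn (b * Real.sqrt (V / (U * (U + V)))) *
    nuFn (b * Real.sqrt ((U + V) / (U * V)))

def rhsTerm (b : ℝ) (m u v : ℕ) : ℝ :=
  if u + v ≤ m then ((m : ℝ) - u - v) / ((u : ℝ) * v * (u + v)) * nuTriple b u v else 0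

def rhsSum (b : ℝ) (m : ℕ) : ℝ := ∑ u ∈ Icc 1 m, ∑ v ∈ Icc 1 m, rhsTerm b m u v

lemma rhs21_eq {b : ℝ} (hb : 0 < b) (m : ℕ) :
    rhs21 b m = b ^ 5 * stdNormalPDF b / 4 * rhsSum b m := by
  have hsum : rhs21 b m = 1 / 4 * b ^ 6 * chiSqPDF 1 (b ^ 2) * rhsSum b m := by
    simp only [rhs21, rhsSum, rhsTerm, nuTriple, mul_assoc]
  rw [hsum, chiSqPDF_one_sq hb]
  field_simp

lemma nuTriple_nonneg (b U V : ℝ) : 0 ≤ nuTriple b U V := by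
  unfold nuTriple
  exact mul_nonneg (mul_nonneg (nuFn_nonneg _) (nuFn_nonneg _)) (nuFn_nonneg _)

/-- The squares of the three arguments of `ν` multiply to `b⁶ / (U V (U + V))`. -/
lemma nuTriple_le {b U V : ℝ} (hb : 0 < b) (hU : 0 < U) (hV : 0 < V) :
    nuTriple b U V ≤ 8 * (U * V * (U + V)) / b ^ 6 := by
  have hν : ∀ r, 0 < r → nuFn (b * Real.sqrt r) ≤ 2 / (b ^ 2 * r) := fun r hr => by
    simpa only [mul_pow, Real.sq_sqrt hr.le] using nuFn_le (b * Real.sqrt r)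
  calc nuTriple b U V
      ≤ 2 / (b ^ 2 * (U / (V * (U + V)))) * (2 / (b ^ 2 * (V / (U * (U + V))))) *
          (2 / (b ^ 2 * ((U + V) / (U * V)))) := by
        unfold nuTriple
        gcongr <;> first | exact nuFn_nonneg _ | exact hν _ (by positivity)
    _ = 8 * (U * V * (U + V)) / b ^ 6 := by field_simp; ring

lemma rhsTerm_nonneg (b : ℝ) (m u v : ℕ) : 0 ≤ rhsTerm b m u v := by
  unfold rhsTerm
  split_ifs with h
  · have : (u : ℝ) + v ≤ m := by exact_mod_cast h
    exact mul_nonneg (div_nonneg (by linarith) (by positivity)) (nuTriple_nonneg _ _ _)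
  · exact le_rfl

lemma rhsTerm_le {b : ℝ} (hb : 0 < b) {m u v : ℕ} (hu : 1 ≤ u) (hv : 1 ≤ v) :
    rhsTerm b m u v ≤ 8 * m / b ^ 6 := by
  unfold rhsTerm
  split_ifs with h
  · have hm : (u : ℝ) + v ≤ m := by exact_mod_cast h
    have hU : (0 : ℝ) < u := by exact_mod_cast hu
    have hV : (0 : ℝ) < v := by exact_mod_cast hv
    calc ((m : ℝ) - u - v) / ((u : ℝ) * v * (u + v)) * nuTriple b u v
        ≤ ((m : ℝ) - u - v) / ((u : ℝ) * v * (u + v)) * (8 * (u * v * (u + v)) / b ^ 6) :=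
          mul_le_mul_of_nonneg_left (nuTriple_le hb hU hV)
            (div_nonneg (by linarith) (by positivity))
      _ = 8 * ((m : ℝ) - u - v) / b ^ 6 := by field_simp
      _ ≤ 8 * m / b ^ 6 := by gcongr; linarith
  · positivity

lemma rhsSum_le {b : ℝ} (hb : 0 < b) (m : ℕ) : rhsSum b m ≤ 8 * (m : ℝ) ^ 3 / b ^ 6 := by
  calc rhsSum b m ≤ ∑ _u ∈ Icc 1 m, ∑ _v ∈ Icc 1 m, 8 * (m : ℝ) / b ^ 6 := by
        refine sum_le_sum fun u hu => sum_le_sum fun v hv => ?_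
        exact rhsTerm_le hb (mem_Icc.mp hu).1 (mem_Icc.mp hv).1
    _ = 8 * (m : ℝ) ^ 3 / b ^ 6 := by
        simp only [sum_const, Nat.card_Icc, add_tsub_cancel_right, nsmul_eq_mul]
        ring

lemma div_mul_add_mem_Icc {k U V : ℝ} (hk : 0 < k) (hU₁ : k ≤ U) (hU₂ : U ≤ 2 * k)
    (hV₁ : k ≤ V) (hV₂ : V ≤ 2 * k) : U / (V * (U + V)) ∈ Set.Icc (1 / (8 * k)) (4 / k) := by
  have hV : 0 < V * (U + V) := by nlinarith
  rw [Set.mem_Icc, div_le_div_iff₀ (by positivity) hV, div_le_div_iff₀ hV hk]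
  constructor <;> nlinarith [mul_le_mul hV₂ (add_le_add hU₂ hV₂) (by linarith) (by linarith)]

lemma add_div_mul_mem_Icc {k U V : ℝ} (hk : 0 < k) (hU₁ : k ≤ U) (hU₂ : U ≤ 2 * k)
    (hV₁ : k ≤ V) (hV₂ : V ≤ 2 * k) : (U + V) / (U * V) ∈ Set.Icc (1 / (8 * k)) (4 / k) := by
  have hUV : 0 < U * V := by nlinarith
  rw [Set.mem_Icc, div_le_div_iff₀ (by positivity) hUV, div_le_div_iff₀ hUV hk]
  constructor <;> nlinarith [mul_le_mul hU₂ hV₂ (by linarith) (by linarith),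
    mul_le_mul hU₁ hV₁ hk.le (by linarith)]

lemma pow_three_le_nuTriple {b U V lo hi δ : ℝ}
    (hδ : ∀ r ∈ Set.Icc lo hi, δ ≤ nuFn (b * Real.sqrt r)) (hδ0 : 0 ≤ δ)
    (h₁ : U / (V * (U + V)) ∈ Set.Icc lo hi) (h₂ : V / (U * (U + V)) ∈ Set.Icc lo hi)
    (h₃ : (U + V) / (U * V) ∈ Set.Icc lo hi) : δ ^ 3 ≤ nuTriple b U V := by
  rw [pow_three, ← mul_assoc]
  exact mul_le_mul (mul_le_mul (hδ _ h₁) (hδ _ h₂) hδ0 (nuFn_nonneg _)) (hδ _ h₃) hδ0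
    (mul_nonneg (nuFn_nonneg _) (nuFn_nonneg _))

lemma one_div_le_coeff {k U V M : ℝ} (hk : 0 < k) (hU₁ : k ≤ U) (hU₂ : U ≤ 2 * k)
    (hV₁ : k ≤ V) (hV₂ : V ≤ 2 * k) (hM : 8 * k ≤ M) :
    1 / (4 * k ^ 2) ≤ (M - U - V) / (U * V * (U + V)) := by
  have hUV : U * V ≤ 4 * k ^ 2 := by nlinarith [mul_le_mul hU₂ hV₂ (by linarith) (by linarith)]
  have hU : 0 < U := by linarith
  have hV : 0 < V := by linarith
  rw [div_le_div_iff₀ (by positivity) (by positivity)]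
  nlinarith [mul_le_mul hUV (add_le_add hU₂ hV₂) (by linarith) (by positivity)]

lemma le_rhsSum {c₁ c₂ b δ : ℝ} {m : ℕ} (hc₁ : 0 < c₁) (hb : 0 < b) (hm : 8 ≤ m)
    (h₁ : c₁ * b ^ 2 ≤ m) (h₂ : (m : ℝ) ≤ c₂ * b ^ 2) (hδ0 : 0 ≤ δ)
    (hδ : ∀ x, 0 ≤ x → c₂⁻¹ ≤ x ^ 2 → x ^ 2 ≤ 64 / c₁ → δ ≤ nuFn x) :
    δ ^ 3 / 4 ≤ rhsSum b m := by
  obtain ⟨k, hk, h8k, h16k⟩ : ∃ k : ℕ, 1 ≤ k ∧ 8 * k ≤ m ∧ m ≤ 16 * k :=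
    ⟨m / 8, by omega, by omega, by omega⟩
  have hkR : (1 : ℝ) ≤ k := by exact_mod_cast hk
  have h8kR : 8 * (k : ℝ) ≤ m := by exact_mod_cast h8k
  have h16kR : (m : ℝ) ≤ 16 * k := by exact_mod_cast h16k
  have hc₂ : 0 < c₂ := by nlinarith
  have hνgrid : ∀ r ∈ Set.Icc (1 / (8 * (k : ℝ))) (4 / k), δ ≤ nuFn (b * Real.sqrt r) := by
    -- `8 k ≤ m ≤ 16 k` and `c₁ b² ≤ m ≤ c₂ b²` put `b² r` in `[1 / c₂, 64 / c₁]`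
    rintro r ⟨hr₁, hr₂⟩
    have hr : 0 < r := lt_of_lt_of_le (by positivity) hr₁
    refine hδ _ (by positivity) ?_ ?_ <;> rw [mul_pow, Real.sq_sqrt hr.le]
    · rw [inv_eq_one_div, div_le_iff₀ hc₂]
      rw [div_le_iff₀ (by positivity)] at hr₁
      nlinarith
    · rw [le_div_iff₀ hc₁]
      rw [le_div_iff₀ (by positivity)] at hr₂
      nlinarith
  have hterm : ∀ u ∈ Icc k (2 * k), ∀ v ∈ Icc k (2 * k),
      δ ^ 3 / (4 * (k : ℝ) ^ 2) ≤ rhsTerm b m u v := by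
    intro u hu v hv
    obtain ⟨hu₁, hu₂⟩ := mem_Icc.mp hu
    obtain ⟨hv₁, hv₂⟩ := mem_Icc.mp hv
    have hU₁ : (k : ℝ) ≤ u := by exact_mod_cast hu₁
    have hU₂ : (u : ℝ) ≤ 2 * k := by exact_mod_cast hu₂
    have hV₁ : (k : ℝ) ≤ v := by exact_mod_cast hv₁
    have hV₂ : (v : ℝ) ≤ 2 * k := by exact_mod_cast hv₂
    have hk0 : (0 : ℝ) < k := by linarith
    have hcoeff := one_div_le_coeff hk0 hU₁ hU₂ hV₁ hV₂ h8kR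
    rw [rhsTerm, if_pos (by omega), div_eq_mul_one_div, mul_comm]
    refine mul_le_mul hcoeff
      (pow_three_le_nuTriple hνgrid hδ0 (div_mul_add_mem_Icc hk0 hU₁ hU₂ hV₁ hV₂)
        (add_comm (u : ℝ) v ▸ div_mul_add_mem_Icc hk0 hV₁ hV₂ hU₁ hU₂)
        (add_div_mul_mem_Icc hk0 hU₁ hU₂ hV₁ hV₂))
      (by positivity) (le_trans (by positivity) hcoeff)
  have hgrid : Icc k (2 * k) ⊆ Icc 1 m := Icc_subset_Icc hk (by omega)
  calc δ ^ 3 / 4 = (k : ℝ) ^ 2 * (δ ^ 3 / (4 * (k : ℝ) ^ 2)) := by field_simp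
    _ ≤ ((k : ℝ) + 1) ^ 2 * (δ ^ 3 / (4 * (k : ℝ) ^ 2)) := by gcongr; linarith
    _ = ∑ _u ∈ Icc k (2 * k), ∑ _v ∈ Icc k (2 * k), δ ^ 3 / (4 * (k : ℝ) ^ 2) := by
        simp only [sum_const, Nat.card_Icc, show 2 * k + 1 - k = k + 1 by omega, nsmul_eq_mul]
        push_cast; ring
    _ ≤ ∑ u ∈ Icc k (2 * k), ∑ v ∈ Icc k (2 * k), rhsTerm b m u v :=
        sum_le_sum fun u hu => sum_le_sum fun v hv => hterm u hu v hv
    _ ≤ ∑ u ∈ Icc k (2 * k), ∑ v ∈ Icc 1 m, rhsTerm b m u v :=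
        sum_le_sum fun u _ => sum_le_sum_of_subset_of_nonneg hgrid fun v _ _ => rhsTerm_nonneg ..
    _ ≤ rhsSum b m := sum_le_sum_of_subset_of_nonneg hgrid fun u _ _ =>
        sum_nonneg fun v _ => rhsTerm_nonneg ..

lemma tendsto_pow_five_mul_stdNormalPDF :
    Tendsto (fun x : ℝ => x ^ 5 * stdNormalPDF x) atTop (nhds 0) := by
  have h := ((rpow_mul_exp_neg_mul_sq_isLittleO_exp_neg one_half_pos (5 : ℕ)
    ).tendsto_zero_of_tendsto (Real.tendsto_exp_atBot.comp
      (tendsto_id.const_mul_atTop_of_neg (by norm_num)))).div_const (Real.sqrt (2 * Real.pi))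
  rw [zero_div] at h
  refine h.congr fun x => ?_
  rw [stdNormalPDF, Real.rpow_natCast]
  ring_nf

lemma exists_rhs21_bounds {c₁ c₂ : ℝ} (hc₁ : 0 < c₁) (hc₁₂ : c₁ ≤ c₂) :
    ∃ C₁ C₂ b₀ : ℝ, 0 < C₁ ∧ C₁ ≤ C₂ ∧
      ∀ b : ℝ, b₀ ≤ b → ∀ m : ℕ, c₁ * b ^ 2 ≤ (m : ℝ) → (m : ℝ) ≤ c₂ * b ^ 2 →
        C₁ * b ^ 5 * stdNormalPDF b ≤ rhs21 b m ∧ rhs21 b m ≤ C₂ * b ^ 5 * stdNormalPDF b := by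
  have hc₂ : 0 < c₂ := hc₁.trans_le hc₁₂
  set δ := 2 / (64 / c₁) * Real.exp (-2 * ∑' n, nuTerm (Real.sqrt c₂⁻¹) n)
  have hδ : 0 < δ := by positivity
  refine ⟨δ ^ 3 / 16, max (δ ^ 3 / 16) (2 * c₂ ^ 3), Real.sqrt (8 / c₁), by positivity,
    le_max_left _ _, fun b hb m h₁ h₂ => ?_⟩
  have hb0 : 0 < b := (Real.sqrt_pos.mpr (by positivity)).trans_le hb
  have hm : 8 ≤ m := by
    have hb2 : 8 / c₁ ≤ b ^ 2 :=
      (Real.sq_sqrt (by positivity)).symm.trans_le (pow_le_pow_left₀ (Real.sqrt_nonneg _) hb 2)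
    rw [div_le_iff₀ hc₁] at hb2
    exact_mod_cast (by linarith : (8 : ℝ) ≤ m)
  have hlower : δ ^ 3 / 4 ≤ rhsSum b m :=
    le_rhsSum hc₁ hb0 hm h₁ h₂ hδ.le fun x hx h h' => le_nuFn (inv_pos.mpr hc₂) hx h h'
  have hupper : rhsSum b m ≤ 8 * c₂ ^ 3 := by
    refine (rhsSum_le hb0 m).trans ?_
    rw [div_le_iff₀ (by positivity)]
    calc 8 * (m : ℝ) ^ 3 ≤ 8 * (c₂ * b ^ 2) ^ 3 := by gcongr
      _ = 8 * c₂ ^ 3 * b ^ 6 := by ring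
  have hφ : 0 ≤ b ^ 5 * stdNormalPDF b := mul_nonneg (by positivity) (stdNormalPDF_nonneg b)
  have hscale : 0 ≤ b ^ 5 * stdNormalPDF b / 4 := div_nonneg hφ zero_le_four
  rw [rhs21_eq hb0]
  constructor
  · calc δ ^ 3 / 16 * b ^ 5 * stdNormalPDF b = b ^ 5 * stdNormalPDF b / 4 * (δ ^ 3 / 4) := by
          ring
      _ ≤ _ := mul_le_mul_of_nonneg_left hlower hscale
  · calc _ ≤ b ^ 5 * stdNormalPDF b / 4 * (8 * c₂ ^ 3) := mul_le_mul_of_nonneg_left hupper hscale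
      _ = 2 * c₂ ^ 3 * (b ^ 5 * stdNormalPDF b) := by ring
      _ ≤ max (δ ^ 3 / 16) (2 * c₂ ^ 3) * (b ^ 5 * stdNormalPDF b) :=
        mul_le_mul_of_nonneg_right (le_max_right _ _) hφ
      _ = _ := (mul_assoc ..).symm

/-- in the regime `c₁ b² ≤ m ≤ c₂ b²`, the approximating quantity `p(b,m)`
is of exact order `b⁵ φ(b)`, and in particular tends to `0` as `b → ∞`. -/
theorem statement10
    (c₁ c₂ : ℝ) (hc₁ : 0 < c₁) (hc₁₂ : c₁ ≤ c₂) :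
    (∃ C₁ C₂ b₀ : ℝ, 0 < C₁ ∧ C₁ ≤ C₂ ∧
      ∀ b : ℝ, b₀ ≤ b → ∀ m : ℕ,
        c₁ * b ^ 2 ≤ (m : ℝ) → (m : ℝ) ≤ c₂ * b ^ 2 →
          C₁ * b ^ 5 * stdNormalPDF b ≤ rhs21 b m ∧
            rhs21 b m ≤ C₂ * b ^ 5 * stdNormalPDF b) ∧
    ∀ (b : ℕ → ℝ) (m : ℕ → ℕ), Tendsto b atTop atTop →
      (∀ ℓ, c₁ * (b ℓ) ^ 2 ≤ (m ℓ : ℝ) ∧ (m ℓ : ℝ) ≤ c₂ * (b ℓ) ^ 2) →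
      Tendsto (fun ℓ => rhs21 (b ℓ) (m ℓ)) atTop (nhds 0) := by
  obtain ⟨C₁, C₂, b₀, hC₁, hC₁₂, hbounds⟩ := exists_rhs21_bounds hc₁ hc₁₂
  refine ⟨⟨C₁, C₂, b₀, hC₁, hC₁₂, hbounds⟩, fun b m hb hm => ?_⟩
  have hlim : ∀ C, Tendsto (fun ℓ => C * b ℓ ^ 5 * stdNormalPDF (b ℓ)) atTop (nhds 0) := by
    intro C
    simpa only [Function.comp_apply, mul_zero, mul_assoc] using
      (tendsto_pow_five_mul_stdNormalPDF.comp hb).const_mul C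
  refine tendsto_of_tendsto_of_tendsto_of_le_of_le' (hlim C₁) (hlim C₂) ?_ ?_ <;>
    filter_upwards [hb.eventually_ge_atTop b₀] with ℓ hℓ
  · exact (hbounds _ hℓ _ (hm ℓ).1 (hm ℓ).2).1
  · exact (hbounds _ hℓ _ (hm ℓ).1 (hm ℓ).2).2

end
end

section
/- Let 0 = τ₀ < τ₁ < ⋯ < τ_M < τ_{M+1} = m be integers and μ₁,…,μ_{M+1} ∈ ℝ. Let X₁,…,X_m be independent with X_i ~ N(μ_n, 1) for τ_{n−1} < i ≤ τ_n, and let X'₁,…,X'_m be i.i.d. N(0,1). Then for every b > 0: P( max_{0 ≤ n ≤ M} max_{τ_n ≤ i < j < k ≤ τ_{n+1}} |Z_{i,j,k}(X)| ≥ b ) ≤ P( max_{0 ≤ i < j < k ≤ m} |Z_{i,j,k}(X')| ≥ b ); that is, the within-segment maximum of the statistic under the change-point model is stochastically dominated by the unrestricted maximum under the no-change model. -/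
open MeasureTheory ProbabilityTheory Filter Finset

noncomputable section

/-!
Inside one segment `(τ n, τ (n + 1)]` all `X l` have the same mean, and `Z_{i,j,k}` does not see a
common shift of `X_{i+1}, …, X_k`; so for `i, j, k` in one segment `Z_{i,j,k}(X) = Z_{i,j,k}(Y)`
with `Y_l = X_l - 𝔼 X_l`. The centred vector `(Y_1, …, Y_m)` is i.i.d. `N(0, 1)`, like
`(X'_1, …, X'_m)`, and the within-segment event for `Y` is contained in the unrestricted one.
To compare laws on `ℕ → ℝ`, the coordinates outside `1, …, m` of both families are replaced by `0`.
-/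

lemma partialSum_sub_partialSum (x : ℕ → ℝ) {i j : ℕ} (hij : i ≤ j) :
    partialSum x j - partialSum x i = ∑ l ∈ Ico i j, x (l + 1) :=
  (sum_Ico_eq_sub _ hij).symm

lemma Zstat_eq_of_eq_add_const {x y : ℕ → ℝ} {i j k : ℕ} (c : ℝ) (hij : i ≤ j) (hjk : j < k)
    (hxy : ∀ l, i < l → l ≤ k → x l = y l + c) : Zstat x i j k = Zstat y i j k := by
  have hsum : ∀ a, i ≤ a → a ≤ k →
      partialSum x a - partialSum x i = partialSum y a - partialSum y i + (a - i : ℝ) * c := by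
    intro a hia hak
    rw [partialSum_sub_partialSum x hia, partialSum_sub_partialSum y hia,
      sum_congr rfl fun l hl => hxy (l + 1) (by grind) (by grind), sum_add_distrib, sum_const,
      Nat.card_Ico, nsmul_eq_mul, Nat.cast_sub hia]
  have hki : (k - i : ℝ) ≠ 0 := sub_ne_zero.2 (by exact_mod_cast (hij.trans_lt hjk).ne')
  unfold Zstat
  rw [hsum j hij hjk.le, hsum k (hij.trans hjk.le) le_rfl]
  congr 1
  field_simp
  ring

@[fun_prop]
lemma measurable_Zstat (i j k : ℕ) : Measurable fun x : ℕ → ℝ => Zstat x i j k := by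
  unfold Zstat partialSum
  fun_prop

def scanExceedSet (m : ℕ) (b : ℝ) : Set (ℕ → ℝ) :=
  {x | ∃ i j k, i < j ∧ j < k ∧ k ≤ m ∧ b ≤ |Zstat x i j k|}

lemma measurableSet_scanExceedSet (m : ℕ) (b : ℝ) : MeasurableSet (scanExceedSet m b) := by
  simp only [scanExceedSet, Set.ofPred_exists, Set.ofPred_and]
  measurability

section Centering

variable {Ω : Type*} [MeasurableSpace Ω] {P : Measure Ω}

lemma integral_eq_of_map_eq_gaussianReal {Y : Ω → ℝ} (hY : Measurable Y) {μ : ℝ} {v : NNReal}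
    (hlaw : P.map Y = gaussianReal μ v) : P[Y] = μ :=
  (HasLaw.integral_eq ⟨hY.aemeasurable, hlaw⟩).trans integral_id_gaussianReal

lemma map_sub_integral_of_map_eq_gaussianReal {Y : Ω → ℝ} (hY : Measurable Y) {μ : ℝ}
    {v : NNReal} (hlaw : P.map Y = gaussianReal μ v) :
    P.map (fun ω => Y ω - P[Y]) = gaussianReal 0 v := by
  rw [integral_eq_of_map_eq_gaussianReal hY hlaw]
  simpa using (gaussianReal_sub_const ⟨hY.aemeasurable, hlaw⟩ μ).map_eq

def centeredTrunc (m : ℕ) (P : Measure Ω) (X : ℕ → Ω → ℝ) (l : ℕ) (ω : Ω) : ℝ :=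
  if l ∈ Icc 1 m then X l ω - P[X l] else 0

variable {X : ℕ → Ω → ℝ} {m : ℕ}

lemma iIndepFun_centeredTrunc (hX : iIndepFun X P) : iIndepFun (centeredTrunc m P X) P :=
  hX.comp (fun l (t : ℝ) => if l ∈ Icc 1 m then t - ∫ ω, X l ω ∂P else 0) fun l => by
    split_ifs <;> fun_prop

lemma measurable_centeredTrunc (hX : ∀ l, Measurable (X l)) (l : ℕ) :
    Measurable (centeredTrunc m P X l) := by
  unfold centeredTrunc
  split_ifs <;> fun_prop

lemma Zstat_centeredTrunc (c : ℝ) (ω : Ω) {i j k : ℕ} (hij : i ≤ j) (hjk : j < k) (hkm : k ≤ m)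
    (hmean : ∀ l, i < l → l ≤ k → P[X l] = c) :
    Zstat (fun l => X l ω) i j k = Zstat (fun l => centeredTrunc m P X l ω) i j k :=
  Zstat_eq_of_eq_add_const c hij hjk fun l hil hlk => by
    rw [centeredTrunc, if_pos (mem_Icc.2 ⟨by omega, by omega⟩), hmean l hil hlk, sub_add_cancel]

variable [IsProbabilityMeasure P]

lemma map_centeredTrunc {v : NNReal} (hX : ∀ l, Measurable (X l))
    (hlaw : ∀ l ∈ Icc 1 m, ∃ μ, P.map (X l) = gaussianReal μ v) (l : ℕ) :
    P.map (centeredTrunc m P X l) = if l ∈ Icc 1 m then gaussianReal 0 v else .dirac 0 := by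
  unfold centeredTrunc
  split_ifs with hl
  · obtain ⟨μ, hμ⟩ := hlaw l hl
    exact map_sub_integral_of_map_eq_gaussianReal (hX l) hμ
  · exact Measure.map_const _ _ |>.trans (by simp)

lemma map_centeredTrunc_eq {Ω' : Type*} [MeasurableSpace Ω'] {P' : Measure Ω'}
    [IsProbabilityMeasure P'] {X' : ℕ → Ω' → ℝ} {v : NNReal}
    (hX : ∀ l, Measurable (X l)) (hindep : iIndepFun X P)
    (hlaw : ∀ l ∈ Icc 1 m, ∃ μ, P.map (X l) = gaussianReal μ v)
    (hX' : ∀ l, Measurable (X' l)) (hindep' : iIndepFun X' P')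
    (hlaw' : ∀ l ∈ Icc 1 m, ∃ μ, P'.map (X' l) = gaussianReal μ v) :
    P.map (fun ω l => centeredTrunc m P X l ω) = P'.map (fun ω l => centeredTrunc m P' X' l ω) := by
  rw [(iIndepFun_centeredTrunc hindep).map_fun_eq_infinitePi_map (measurable_centeredTrunc hX),
    (iIndepFun_centeredTrunc hindep').map_fun_eq_infinitePi_map (measurable_centeredTrunc hX')]
  simp only [map_centeredTrunc hX hlaw, map_centeredTrunc hX' hlaw']

end Centering

lemma apply_succ_le_of_lt_succ {τ : ℕ → ℕ} {M n : ℕ} (hτ : ∀ n ≤ M, τ n < τ (n + 1))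
    (hn : n ≤ M) : τ (n + 1) ≤ τ (M + 1) := by
  have hmono : MonotoneOn τ (Set.Iic (M + 1)) :=
    monotoneOn_of_le_succ Set.ordConnected_Iic fun a _ _ ha => (hτ a (by simpa using ha)).le
  exact hmono (by simpa using hn) (by simp) (by omega)

lemma exists_segment {τ : ℕ → ℕ} {M l : ℕ} (hτ0 : τ 0 = 0) (hl : 0 < l) (hlM : l ≤ τ (M + 1)) :
    ∃ n ≤ M, τ n < l ∧ l ≤ τ (n + 1) := by
  classical
  have hex : ∃ N, l ≤ τ N := ⟨_, hlM⟩
  have hN0 : Nat.find hex ≠ 0 := fun h => by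
    have := Nat.find_spec hex
    rw [h, hτ0] at this
    omega
  obtain ⟨n, hn⟩ := Nat.exists_eq_add_one_of_ne_zero hN0
  refine ⟨n, ?_, lt_of_not_ge (Nat.find_min hex (by omega)), hn ▸ Nat.find_spec hex⟩
  have := Nat.find_min' hex hlM
  omega

theorem statement14_general
    (M m : ℕ) (τ : ℕ → ℕ) (hτ0 : τ 0 = 0) (hτlast : τ (M + 1) = m)
    (hτmono : ∀ n ≤ M, τ n < τ (n + 1))
    (μ : ℕ → ℝ)
    (Ω : Type*) [MeasurableSpace Ω] (P : Measure Ω) [IsProbabilityMeasure P]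
    (X : ℕ → Ω → ℝ)
    (hmeas : ∀ i, Measurable (X i))
    (hindep : iIndepFun X P)
    (hlaw : ∀ n i, n + 1 ≤ M + 1 → τ n < i → i ≤ τ (n + 1) → P.map (X i) = gaussianReal (μ (n + 1)) 1)
    (Ω' : Type*) [MeasurableSpace Ω'] (P' : Measure Ω') [IsProbabilityMeasure P']
    (X' : ℕ → Ω' → ℝ)
    (hmeas' : ∀ i, Measurable (X' i))
    (hindep' : iIndepFun X' P')
    (hlaw' : ∀ i, 1 ≤ i → i ≤ m → P'.map (X' i) = gaussianReal 0 1)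
    (b : ℝ) :
    P {ω | ∃ n ≤ M, ∃ i j k : ℕ, τ n ≤ i ∧ i < j ∧ j < k ∧ k ≤ τ (n + 1) ∧
        b ≤ |Zstat (fun l => X l ω) i j k|} ≤
      P' {ω | ∃ i j k : ℕ, i < j ∧ j < k ∧ k ≤ m ∧
        b ≤ |Zstat (fun l => X' l ω) i j k|} := by
  have hgauss : ∀ l ∈ Icc 1 m, ∃ ν, P.map (X l) = gaussianReal ν 1 := fun l hl => by
    obtain ⟨n, hn, hnl, hln⟩ := exists_segment hτ0 (mem_Icc.1 hl).1 (hτlast ▸ (mem_Icc.1 hl).2)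
    exact ⟨_, hlaw n l (by omega) hnl hln⟩
  have hgauss' : ∀ l ∈ Icc 1 m, ∃ ν, P'.map (X' l) = gaussianReal ν 1 :=
    fun l hl => ⟨0, hlaw' l (mem_Icc.1 hl).1 (mem_Icc.1 hl).2⟩
  set Y := fun ω l => centeredTrunc m P X l ω
  set Y' := fun ω l => centeredTrunc m P' X' l ω
  calc _ ≤ P (Y ⁻¹' scanExceedSet m b) := measure_mono ?_
    _ ≤ P.map Y (scanExceedSet m b) :=
      Measure.le_map_apply (measurable_pi_lambda _ (measurable_centeredTrunc hmeas)).aemeasurable _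
    _ = P'.map Y' (scanExceedSet m b) := by
      rw [map_centeredTrunc_eq hmeas hindep hgauss hmeas' hindep' hgauss']
    _ = P' (Y' ⁻¹' scanExceedSet m b) :=
      Measure.map_apply (measurable_pi_lambda _ (measurable_centeredTrunc hmeas'))
        (measurableSet_scanExceedSet m b)
    _ ≤ _ := measure_mono ?_
  · rintro ω ⟨n, hn, i, j, k, hni, hij, hjk, hkn, hb⟩
    have hkm : k ≤ m := hτlast ▸ hkn.trans (apply_succ_le_of_lt_succ hτmono hn)
    refine ⟨i, j, k, hij, hjk, hkm, ?_⟩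
    rwa [← Zstat_centeredTrunc (μ (n + 1)) ω hij.le hjk hkm fun l hil hlk =>
      integral_eq_of_map_eq_gaussianReal (hmeas l) (hlaw n l (by omega) (by omega) (by omega))]
  · rintro ω ⟨i, j, k, hij, hjk, hkm, hb⟩
    refine ⟨i, j, k, hij, hjk, hkm, ?_⟩
    rwa [Zstat_centeredTrunc 0 ω hij.le hjk hkm fun l hil hlk =>
      integral_eq_of_map_eq_gaussianReal (hmeas' l) (hlaw' l (by omega) (by omega))]

/-- the within-segment maximum of `|Z_{i,j,k}|` under the change-point model
is stochastically dominated by the unrestricted maximum under the no-change model. -/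
theorem statement14
    (M m : ℕ) (τ : ℕ → ℕ) (hτ0 : τ 0 = 0) (hτlast : τ (M + 1) = m)
    (hτmono : ∀ n ≤ M, τ n < τ (n + 1))
    (μ : ℕ → ℝ)
    (Ω : Type*) [MeasurableSpace Ω] (P : Measure Ω) [IsProbabilityMeasure P]
    (X : ℕ → Ω → ℝ)
    (hmeas : ∀ i, Measurable (X i))
    (hindep : iIndepFun X P)
    (hlaw : ∀ n i, n + 1 ≤ M + 1 → τ n < i → i ≤ τ (n + 1) → P.map (X i) = gaussianReal (μ (n + 1)) 1)
    (Ω' : Type*) [MeasurableSpace Ω'] (P' : Measure Ω') [IsProbabilityMeasure P']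
    (X' : ℕ → Ω' → ℝ)
    (hmeas' : ∀ i, Measurable (X' i))
    (hindep' : iIndepFun X' P')
    (hlaw' : ∀ i, 1 ≤ i → i ≤ m → P'.map (X' i) = gaussianReal 0 1)
    (b : ℝ) (hb : 0 < b) :
    P {ω | ∃ n ≤ M, ∃ i j k : ℕ, τ n ≤ i ∧ i < j ∧ j < k ∧ k ≤ τ (n + 1) ∧
        b ≤ |Zstat (fun l => X l ω) i j k|} ≤
      P' {ω | ∃ i j k : ℕ, i < j ∧ j < k ∧ k ≤ m ∧
        b ≤ |Zstat (fun l => X' l ω) i j k|} :=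
  statement14_general M m τ hτ0 hτlast hτmono μ Ω P X hmeas hindep hlaw Ω' P' X' hmeas' hindep'
    hlaw' b

end
end
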